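/- Let D₊, D₋ > 0, λ > 0, α = 1/√D₋ + 1/√D₊, and Erfc(x) = (2/√π)∫_x^∞ e^{−u²} du. Define G₊₊(s,s₁,t) = (4πD₊t)^{-1/2}[exp(−(s−s₁)²/(4D₊t)) + exp(−(s+s₁)²/(4D₊t))] − (λ/D₊)·exp(λα(s+s₁)/√D₊ + λ²α²t)·Erfc((s+s₁)/(2√(D₊t)) + λα√t), and G₋₊(s,s₁,t) = (λ/√(D₋D₊))·exp((λα/√D₋)(−s + s₁√(D₋/D₊)) + λ²α²t)·Erfc((−s + s₁√(D₋/D₊))/(2√(D₋t)) + λα√t). Then for every fixed s₁ > 0 and all t > 0: (i) for s > 0, ∂G₊₊/∂t = D₊ · ∂²G₊₊/∂s²; (ii) for s < 0, ∂G₋₊/∂t = D₋ · ∂²G₋₊/∂s². -/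

import Mathlib

open MeasureTheory Set

/-!
Both components are combinations of two classical solutions of `∂ₜu = D ∂ₓ²u` for `t > 0`: the
Gaussian kernel, and `exp (c x / √D + c² t) * f z` with `z = x / (2√(Dt)) + c √t`, for any `f`
with `f' z = k exp (-z²)`, such as `Erfc`. In the latter the terms in `f` cancel through the
exponential prefactor, and those in `f'` because `∂ₜz = c / √t - z / (2t)`. The heat equation is
linear and invariant under translations and the reflection `x ↦ -x` of space, so `G₊₊` and `G₋₊`
solve it.
-/

theorem hasDerivAt_integral_Ioi {E : Type*} [NormedAddCommGroup E] [NormedSpace ℝ E]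
    [CompleteSpace E] {f : ℝ → E} (hi : Integrable f) (hc : Continuous f) (x : ℝ) :
    HasDerivAt (fun y => ∫ u in Ioi y, f u) (-f x) x := by
  have hsplit : (fun y => ∫ u in Ioi y, f u) =
      fun y => (∫ u in Ioi 0, f u) - ∫ u in (0 : ℝ)..y, f u := by
    funext y
    rw [← intervalIntegral.integral_Ioi_sub_Ioi' hi.integrableOn hi.integrableOn, sub_sub_cancel]
  rw [hsplit]
  exact ((hc.integral_hasStrictDerivAt 0 x).hasDerivAt).const_sub _

def IsHeatSolution (D : ℝ) (u : ℝ → ℝ → ℝ) : Prop :=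
  ∃ ux uxx : ℝ → ℝ → ℝ, ∀ x t, 0 < t →
    HasDerivAt (u · t) (ux x t) x ∧ HasDerivAt (ux · t) (uxx x t) x ∧
      HasDerivAt (u x ·) (D * uxx x t) t

namespace IsHeatSolution

variable {D : ℝ} {u v : ℝ → ℝ → ℝ}

theorem deriv_eq (h : IsHeatSolution D u) {t : ℝ} (ht : 0 < t) (x : ℝ) :
    deriv (u x ·) t = D * deriv (deriv (u · t)) x := by
  obtain ⟨ux, uxx, hu⟩ := h
  have hux : deriv (u · t) = (ux · t) := funext fun y => (hu y t ht).1.deriv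
  rw [(hu x t ht).2.2.deriv, hux, (hu x t ht).2.1.deriv]

theorem add (hu : IsHeatSolution D u) (hv : IsHeatSolution D v) :
    IsHeatSolution D (fun x t => u x t + v x t) := by
  obtain ⟨ux, uxx, hu⟩ := hu
  obtain ⟨vx, vxx, hv⟩ := hv
  refine ⟨fun x t => ux x t + vx x t, fun x t => uxx x t + vxx x t, fun x t ht => ?_⟩
  obtain ⟨hu₁, hu₂, hut⟩ := hu x t ht
  obtain ⟨hv₁, hv₂, hvt⟩ := hv x t ht
  exact ⟨hu₁.add hv₁, hu₂.add hv₂, mul_add D _ _ ▸ hut.add hvt⟩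

theorem const_mul (a : ℝ) (hu : IsHeatSolution D u) :
    IsHeatSolution D (fun x t => a * u x t) := by
  obtain ⟨ux, uxx, hu⟩ := hu
  refine ⟨fun x t => a * ux x t, fun x t => a * uxx x t, fun x t ht => ?_⟩
  obtain ⟨hu₁, hu₂, hut⟩ := hu x t ht
  exact ⟨hu₁.const_mul a, hu₂.const_mul a, mul_left_comm a D _ ▸ hut.const_mul a⟩

theorem sub (hu : IsHeatSolution D u) (hv : IsHeatSolution D v) :
    IsHeatSolution D (fun x t => u x t - v x t) := by
  simpa only [sub_eq_add_neg, neg_one_mul] using hu.add (hv.const_mul (-1))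

theorem comp_add_const (a : ℝ) (hu : IsHeatSolution D u) :
    IsHeatSolution D (fun x t => u (x + a) t) := by
  obtain ⟨ux, uxx, hu⟩ := hu
  refine ⟨fun x t => ux (x + a) t, fun x t => uxx (x + a) t, fun x t ht => ?_⟩
  obtain ⟨hu₁, hu₂, hut⟩ := hu (x + a) t ht
  exact ⟨hu₁.comp_add_const x a, hu₂.comp_add_const x a, hut⟩

theorem comp_sub_const (a : ℝ) (hu : IsHeatSolution D u) :
    IsHeatSolution D (fun x t => u (x - a) t) := by
  simpa only [sub_eq_add_neg] using hu.comp_add_const (-a)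

theorem comp_neg (hu : IsHeatSolution D u) : IsHeatSolution D (fun x t => u (-x) t) := by
  obtain ⟨ux, uxx, hu⟩ := hu
  refine ⟨fun x t => -ux (-x) t, fun x t => uxx (-x) t, fun x t ht => ?_⟩
  obtain ⟨hu₁, hu₂, hut⟩ := hu (-x) t ht
  have hneg := hasDerivAt_neg x
  have hux : HasDerivAt (fun y => ux (-y) t) (-uxx (-x) t) x := by
    simpa [Function.comp_def] using hu₂.comp x hneg
  refine ⟨by simpa [Function.comp_def] using hu₁.comp x hneg, ?_, hut⟩
  simpa only [neg_neg] using hux.fun_neg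

end IsHeatSolution

noncomputable def heatKernel (D x t : ℝ) : ℝ :=
  (4 * Real.pi * D * t) ^ (-(1 : ℝ) / 2) * Real.exp (-x ^ 2 / (4 * D * t))

theorem isHeatSolution_heatKernel {D : ℝ} (hD : 0 < D) : IsHeatSolution D (heatKernel D) := by
  refine ⟨fun x t => heatKernel D x t * (-x / (2 * D * t)),
    fun x t => heatKernel D x t * ((x / (2 * D * t)) ^ 2 - 1 / (2 * D * t)), fun x t ht => ?_⟩
  have hDt : 0 < D * t := mul_pos hD ht
  have hx : ∀ y, HasDerivAt (heatKernel D · t) (heatKernel D y t * (-y / (2 * D * t))) y := by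
    intro y
    have hexp : HasDerivAt (fun ξ => -ξ ^ 2 / (4 * D * t)) (-(2 * y) / (4 * D * t)) y := by
      simpa using ((hasDerivAt_pow 2 y).neg).div_const (4 * D * t)
    refine (hexp.exp.const_mul _).congr_deriv ?_
    unfold heatKernel
    field_simp
    ring
  refine ⟨hx x, ?_, ?_⟩
  · have hlin : HasDerivAt (fun ξ => -ξ / (2 * D * t)) (-1 / (2 * D * t)) x := by
      simpa using (hasDerivAt_id x).neg.div_const (2 * D * t)
    refine ((hx x).mul hlin).congr_deriv ?_
    field_simp
    ring
  · have hpos : 0 < 4 * Real.pi * D * t := by positivity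
    have hpow : HasDerivAt (fun τ => (4 * Real.pi * D * τ) ^ (-(1 : ℝ) / 2))
        (4 * Real.pi * D * (-(1 : ℝ) / 2) * (4 * Real.pi * D * t) ^ (-(1 : ℝ) / 2 - 1)) t := by
      simpa using ((hasDerivAt_id t).const_mul (4 * Real.pi * D)).rpow_const (Or.inl hpos.ne')
    have hexp : HasDerivAt (fun τ => -x ^ 2 / (4 * D * τ))
        (x ^ 2 * (4 * D) / (4 * D * t) ^ 2) t := by
      simpa using (hasDerivAt_const t (-x ^ 2)).fun_div ((hasDerivAt_id t).const_mul (4 * D))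
        (by positivity)
    refine (hpow.mul hexp.exp).congr_deriv ?_
    rw [Real.rpow_sub_one hpos.ne']
    unfold heatKernel
    field_simp
    ring

noncomputable def erfcArg (D c x t : ℝ) : ℝ :=
  x / (2 * Real.sqrt (D * t)) + c * Real.sqrt t

noncomputable def expErfcKernel (f : ℝ → ℝ) (D c x t : ℝ) : ℝ :=
  Real.exp (c * x / Real.sqrt D + c ^ 2 * t) * f (erfcArg D c x t)

theorem hasDerivAt_erfcArg_space (D c x t : ℝ) :
    HasDerivAt (erfcArg D c · t) (1 / (2 * Real.sqrt (D * t))) x := by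
  simpa [erfcArg, one_div] using
    ((hasDerivAt_id x).div_const (2 * Real.sqrt (D * t))).add_const (c * Real.sqrt t)

theorem hasDerivAt_erfcArg_time {D : ℝ} (hD : 0 < D) (c x : ℝ) {t : ℝ} (ht : 0 < t) :
    HasDerivAt (erfcArg D c x ·) ((c - x / (2 * Real.sqrt D * t)) / (2 * Real.sqrt t)) t := by
  have hsqrt := Real.hasDerivAt_sqrt ht.ne'
  have hsD : 0 < Real.sqrt D := Real.sqrt_pos.2 hD
  have hst : 0 < Real.sqrt t := Real.sqrt_pos.2 ht
  simp only [erfcArg, Real.sqrt_mul hD.le]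
  refine (((hsqrt.const_mul (Real.sqrt D)).const_mul 2).fun_inv (by positivity) |>.const_mul x
    |>.fun_add (hsqrt.const_mul c)).congr_deriv ?_
  field_simp
  rw [Real.sq_sqrt ht.le]
  ring

theorem isHeatSolution_expErfcKernel {f : ℝ → ℝ} {k : ℝ}
    (hf : ∀ z, HasDerivAt f (k * Real.exp (-z ^ 2)) z) {D : ℝ} (hD : 0 < D) (c : ℝ) :
    IsHeatSolution D (expErfcKernel f D c) := by
  refine ⟨fun x t => Real.exp (c * x / Real.sqrt D + c ^ 2 * t) *
      (c / Real.sqrt D * f (erfcArg D c x t) +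
        k * Real.exp (-erfcArg D c x t ^ 2) / (2 * Real.sqrt (D * t))),
    fun x t => Real.exp (c * x / Real.sqrt D + c ^ 2 * t) *
      (c ^ 2 / D * f (erfcArg D c x t) + k * Real.exp (-erfcArg D c x t ^ 2) *
        (c / (Real.sqrt D * Real.sqrt (D * t)) - erfcArg D c x t / (2 * D * t))),
    fun x t ht => ?_⟩
  have hsD : 0 < Real.sqrt D := Real.sqrt_pos.2 hD
  have hst : 0 < Real.sqrt t := Real.sqrt_pos.2 ht
  have hsqD : Real.sqrt D ^ 2 = D := Real.sq_sqrt hD.le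
  have hsqt : Real.sqrt t ^ 2 = t := Real.sq_sqrt ht.le
  have hDt : 0 < Real.sqrt (D * t) := Real.sqrt_pos.2 (mul_pos hD ht)
  have hφ : HasDerivAt (fun ξ => c * ξ / Real.sqrt D + c ^ 2 * t) (c / Real.sqrt D) x := by
    simpa using ((hasDerivAt_id x).const_mul c).div_const (Real.sqrt D) |>.add_const (c ^ 2 * t)
  have hzx := hasDerivAt_erfcArg_space D c x t
  have hfz : HasDerivAt (fun ξ => f (erfcArg D c ξ t))
      (k * Real.exp (-erfcArg D c x t ^ 2) / (2 * Real.sqrt (D * t))) x :=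
    ((hf _).comp x hzx).congr_deriv (by ring)
  refine ⟨(hφ.exp.mul hfz).congr_deriv (by ring), ?_, ?_⟩
  · have hgz : HasDerivAt (fun ξ => Real.exp (-erfcArg D c ξ t ^ 2))
        (Real.exp (-erfcArg D c x t ^ 2) * -(erfcArg D c x t / Real.sqrt (D * t))) x :=
      (hzx.fun_pow 2).fun_neg.exp.congr_deriv (by field_simp; ring)
    refine (hφ.exp.mul ((hfz.const_mul _).fun_add ((hgz.const_mul k).div_const _))).congr_deriv ?_
    simp only [Real.sqrt_mul hD.le] at hDt ⊢
    generalize Real.sqrt D = a at *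
    generalize Real.sqrt t = b at *
    subst hsqD hsqt
    field_simp
    ring
  · refine ((hasDerivAt_id t |>.const_mul (c ^ 2) |>.const_add (c * x / Real.sqrt D)).exp.mul
      ((hf _).comp t (hasDerivAt_erfcArg_time hD c x ht))).congr_deriv ?_
    simp only [id, Function.comp_apply]
    generalize Real.exp (-erfcArg D c x t ^ 2) = E
    generalize f (erfcArg D c x t) = F
    simp only [erfcArg, Real.sqrt_mul hD.le] at hDt ⊢
    generalize Real.sqrt D = a at *
    generalize Real.sqrt t = b at *
    subst hsqD hsqt
    field_simp
    ring

theorem hasDerivAt_erfc {Erfc : ℝ → ℝ}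
    (hErfc : ∀ x, Erfc x = (2 / Real.sqrt Real.pi) * ∫ u in Ioi x, Real.exp (-u ^ 2)) (z : ℝ) :
    HasDerivAt Erfc (-(2 / Real.sqrt Real.pi) * Real.exp (-z ^ 2)) z := by
  have hint : Integrable (fun u : ℝ => Real.exp (-u ^ 2)) := by
    simpa using integrable_exp_neg_mul_sq one_pos
  rw [funext hErfc, neg_mul, ← mul_neg]
  exact (hasDerivAt_integral_Ioi hint (by fun_prop) z).const_mul _

theorem green_function_finite_lambda_solves_heat_equation_general
    (Dp Dm lam α : ℝ) (hDp : 0 < Dp) (hDm : 0 < Dm)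
    (Erfc : ℝ → ℝ)
    (hErfc : ∀ x, Erfc x = (2 / Real.sqrt Real.pi) * ∫ u in Set.Ioi x, Real.exp (-u ^ 2))
    (Gpp Gmp : ℝ → ℝ → ℝ → ℝ)
    (hGpp : ∀ s s₁ t, Gpp s s₁ t = (4 * Real.pi * Dp * t) ^ (-(1 : ℝ) / 2) *
        (Real.exp (-(s - s₁) ^ 2 / (4 * Dp * t)) + Real.exp (-(s + s₁) ^ 2 / (4 * Dp * t))) -
        (lam / Dp) * Real.exp (lam * α * (s + s₁) / Real.sqrt Dp + lam ^ 2 * α ^ 2 * t) *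
          Erfc ((s + s₁) / (2 * Real.sqrt (Dp * t)) + lam * α * Real.sqrt t))
    (hGmp : ∀ s s₁ t, Gmp s s₁ t = (lam / Real.sqrt (Dm * Dp)) *
        Real.exp ((lam * α / Real.sqrt Dm) * (-s + s₁ * Real.sqrt (Dm / Dp)) +
          lam ^ 2 * α ^ 2 * t) *
          Erfc ((-s + s₁ * Real.sqrt (Dm / Dp)) / (2 * Real.sqrt (Dm * t)) +
            lam * α * Real.sqrt t))
    (s₁ : ℝ) :
    (∀ s t : ℝ, 0 < t → 0 < s →
      deriv (fun τ => Gpp s s₁ τ) t = Dp * deriv (deriv (fun σ => Gpp σ s₁ t)) s) ∧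
    (∀ s t : ℝ, 0 < t → s < 0 →
      deriv (fun τ => Gmp s s₁ τ) t = Dm * deriv (deriv (fun σ => Gmp σ s₁ t)) s) := by
  have hE := hasDerivAt_erfc hErfc
  have hpp : IsHeatSolution Dp (fun s t => Gpp s s₁ t) := by
    have hK := isHeatSolution_heatKernel hDp
    convert ((hK.comp_sub_const s₁).add (hK.comp_add_const s₁)).sub
      (((isHeatSolution_expErfcKernel hE hDp (lam * α)).comp_add_const s₁).const_mul (lam / Dp))
      using 3 with s t
    rw [hGpp, heatKernel, heatKernel, expErfcKernel, erfcArg, mul_pow]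
    ring
  have hmp : IsHeatSolution Dm (fun s t => Gmp s s₁ t) := by
    convert (((isHeatSolution_expErfcKernel hE hDm (lam * α)).comp_add_const
      (s₁ * Real.sqrt (Dm / Dp))).comp_neg).const_mul (lam / Real.sqrt (Dm * Dp)) using 3 with s t
    rw [hGmp, expErfcKernel, erfcArg, mul_pow, div_mul_eq_mul_div (lam * α)]
    ring
  exact ⟨fun s t ht _ => hpp.deriv_eq ht s, fun s t ht _ => hmp.deriv_eq ht s⟩

/-- Each component of the explicit Green function of the one-dimensional two-phase heat
transmission problem with finite interface resistance `λ` solves the corresponding heat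
equation: `∂G₊₊/∂t = D₊ ∂²G₊₊/∂s²` for `s > 0` and `∂G₋₊/∂t = D₋ ∂²G₋₊/∂s²` for `s < 0`. -/
theorem green_function_finite_lambda_solves_heat_equation
    (Dp Dm lam α : ℝ) (hDp : 0 < Dp) (hDm : 0 < Dm) (hlam : 0 < lam)
    (hα : α = 1 / Real.sqrt Dm + 1 / Real.sqrt Dp)
    (Erfc : ℝ → ℝ)
    (hErfc : ∀ x, Erfc x = (2 / Real.sqrt Real.pi) * ∫ u in Set.Ioi x, Real.exp (-u ^ 2))
    (Gpp Gmp : ℝ → ℝ → ℝ → ℝ)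
    (hGpp : ∀ s s₁ t, Gpp s s₁ t = (4 * Real.pi * Dp * t) ^ (-(1 : ℝ) / 2) *
        (Real.exp (-(s - s₁) ^ 2 / (4 * Dp * t)) + Real.exp (-(s + s₁) ^ 2 / (4 * Dp * t))) -
        (lam / Dp) * Real.exp (lam * α * (s + s₁) / Real.sqrt Dp + lam ^ 2 * α ^ 2 * t) *
          Erfc ((s + s₁) / (2 * Real.sqrt (Dp * t)) + lam * α * Real.sqrt t))
    (hGmp : ∀ s s₁ t, Gmp s s₁ t = (lam / Real.sqrt (Dm * Dp)) *
        Real.exp ((lam * α / Real.sqrt Dm) * (-s + s₁ * Real.sqrt (Dm / Dp)) +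
          lam ^ 2 * α ^ 2 * t) *
          Erfc ((-s + s₁ * Real.sqrt (Dm / Dp)) / (2 * Real.sqrt (Dm * t)) +
            lam * α * Real.sqrt t))
    (s₁ : ℝ) (hs₁ : 0 < s₁) :
    (∀ s t : ℝ, 0 < t → 0 < s →
      deriv (fun τ => Gpp s s₁ τ) t = Dp * deriv (deriv (fun σ => Gpp σ s₁ t)) s) ∧
    (∀ s t : ℝ, 0 < t → s < 0 →
      deriv (fun τ => Gmp s s₁ τ) t = Dm * deriv (deriv (fun σ => Gmp σ s₁ t)) s) :=
  green_function_finite_lambda_solves_heat_equation_general Dp Dm lam α hDp hDm Erfc hErfc Gpp Gmp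
    hGpp hGmp s₁
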